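/- Let G=(V,E) and 𝒢=(𝒱,ℰ) be finite simple undirected graphs and let φ: V → 𝒱 be a surjective horizontally conformal map. Let y∈𝒱 with deg_𝒢(y) ≥ 1, let y'∼y, and suppose z∈φ⁻¹(y) has at least one G-neighbor outside φ⁻¹(y). Then the conditional probability that the simple random walk on G, standing at z, exits φ⁻¹(y) into φ⁻¹(y') in one step, given that it exits φ⁻¹(y) in one step, equals 1/deg_𝒢(y); equivalently, k_{y'}(z)/(deg_G(z) − k_y(z)) = 1/deg_𝒢(y), where k_y(z) is the number of G-neighbors of z inside φ⁻¹(y). -/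

import Mathlib

open Finset Classical

variable {V W : Type*}

/-- Degree of a vertex in a finite simple graph (classical count of neighbors). -/
noncomputable def gdeg [Fintype V] (G : SimpleGraph V) (v : V) : ℕ :=
  (Finset.univ.filter (fun z => G.Adj v z)).card

/-- A function `f` is harmonic at the vertex `v`: the degree is positive and
`f v` equals the average of `f` over the neighbors of `v`. -/
def HarmonicAt [Fintype V] (G : SimpleGraph V) (f : V → ℝ) (v : V) : Prop :=
  0 < gdeg G v ∧
    f v = (∑ z ∈ Finset.univ.filter (fun z => G.Adj v z), f z) / (gdeg G v : ℝ)

/-- `φ` is a harmonic morphism: the pullback of any function harmonic at a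
macro-node `y` is harmonic at every node of the macro-set `φ⁻¹(y)`. -/
def HarmonicMorphism [Fintype V] [Fintype W] (G : SimpleGraph V) (H : SimpleGraph W)
    (φ : V → W) : Prop :=
  ∀ y : W, ∀ x : V, φ x = y → ∀ f : W → ℝ, HarmonicAt H f y → HarmonicAt G (f ∘ φ) x

/-- `φ` is a weak homomorphism: adjacent nodes map to adjacent or identical macro-nodes. -/
def WeakHom (G : SimpleGraph V) (H : SimpleGraph W) (φ : V → W) : Prop :=
  ∀ x z : V, G.Adj x z → H.Adj (φ x) (φ z) ∨ φ x = φ z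

/-- Multiplicity `k_{y'}(x)`: the number of neighbors of `x` lying in the macro-set `φ⁻¹(y')`. -/
noncomputable def mult [Fintype V] (G : SimpleGraph V) (φ : V → W) (y' : W) (x : V) : ℕ :=
  (Finset.univ.filter (fun z => φ z = y' ∧ G.Adj x z)).card

/-- Extended multiplicity `k̃_{y'}(x)`: the number of `z ∈ φ⁻¹(y')` with `z ∼ x` or `z = x`. -/
noncomputable def emult [Fintype V] (G : SimpleGraph V) (φ : V → W) (y' : W) (x : V) : ℕ :=
  (Finset.univ.filter (fun z => φ z = y' ∧ (G.Adj x z ∨ z = x))).card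

/-- `φ` is horizontally conformal: a weak homomorphism whose multiplicities
`k_{y'}(x)` take the same value over all macro-nodes `y'` adjacent to `y = φ x`. -/
def HorizontallyConformal [Fintype V] (G : SimpleGraph V) (H : SimpleGraph W)
    (φ : V → W) : Prop :=
  WeakHom G H φ ∧
    ∀ y : W, ∀ x : V, φ x = y → ∀ y₁ y₂ : W, H.Adj y y₁ → H.Adj y y₂ →
      mult G φ y₁ x = mult G φ y₂ x

/-- `φ` is combinatorial conformal: a weak homomorphism whose extended multiplicities
`k̃_{y'}(x)` take the same value over all `y'` with `y' ∼ y` or `y' = y`, where `y = φ x`. -/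
def CombinatorialConformal [Fintype V] (G : SimpleGraph V) (H : SimpleGraph W)
    (φ : V → W) : Prop :=
  WeakHom G H φ ∧
    ∀ y : W, ∀ x : V, φ x = y → ∀ y₁ y₂ : W,
      (H.Adj y y₁ ∨ y₁ = y) → (H.Adj y y₂ ∨ y₂ = y) →
      emult G φ y₁ x = emult G φ y₂ x

/-- The boundary `∂G_y`: vertices outside the macro-set `φ⁻¹(y)` adjacent to it. -/
def boundarySet (G : SimpleGraph V) (φ : V → W) (y : W) : Set V :=
  {z | φ z ≠ y ∧ ∃ x : V, φ x = y ∧ G.Adj x z}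

/-- `h` solves the first-exit (Dirichlet) problem characterizing the harmonic
measure `ℋ_y(·, y')`: it is harmonic (average of neighbors) at every vertex of
the macro-set `φ⁻¹(y)`, equals `1` on `∂G_{yy'}` and `0` on `∂G_y ∖ ∂G_{yy'}`. -/
def IsExitSolution [Fintype V] (G : SimpleGraph V) (φ : V → W) (y y' : W)
    (h : V → ℝ) : Prop :=
  (∀ x : V, φ x = y →
      (gdeg G x : ℝ) * h x = ∑ z ∈ Finset.univ.filter (fun z => G.Adj x z), h z) ∧
  (∀ z : V, z ∈ boundarySet G φ y → φ z = y' → h z = 1) ∧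
  (∀ z : V, z ∈ boundarySet G φ y → φ z ≠ y' → h z = 0)

/-- The quotient graph of a coarse-graining `φ`: two distinct macro-nodes are
adjacent iff some edge of `G` joins their pre-images. -/
def quotientGraph (G : SimpleGraph V) (φ : V → W) : SimpleGraph W where
  Adj y y' := y ≠ y' ∧ ∃ x z : V, φ x = y ∧ φ z = y' ∧ G.Adj x z
  symm := ⟨fun _ _ ⟨h1, x, z, hx, hz, hadj⟩ => ⟨h1.symm, z, x, hz, hx, hadj.symm⟩⟩
  loopless := ⟨fun _ ⟨h1, _⟩ => h1 rfl⟩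

/-!
Since `φ` is a weak homomorphism, every neighbour of `z` lies in `φ⁻¹(y)` or in `φ⁻¹(y'')` for
some `y'' ∼ y`, so `deg_G(z) = k_y(z) + ∑_{y'' ∼ y} k_{y''}(z)`. Horizontal conformality makes all
the summands equal to `k_{y'}(z)`, hence `deg_G(z) - k_y(z) = deg_𝒢(y) · k_{y'}(z)`, and
`k_{y'}(z) > 0` because `z` has a neighbour outside its macro-set.
-/

section Multiplicity

variable [Fintype V] {G : SimpleGraph V} {H : SimpleGraph W} {φ : V → W}

theorem gdeg_eq_sum_mult [Fintype W] (G : SimpleGraph V) (φ : V → W) (x : V) :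
    gdeg G x = ∑ y, mult G φ y x := by
  rw [gdeg, card_eq_sum_card_fiberwise (f := φ) (t := univ) fun _ _ => mem_univ _]
  refine sum_congr rfl fun y _ => ?_
  rw [filter_filter, mult]
  simp only [and_comm]

theorem mult_pos_of_adj {x w : V} (h : G.Adj x w) : 0 < mult G φ (φ w) x :=
  card_pos.mpr ⟨w, by simp [h]⟩

theorem WeakHom.mult_eq_zero (hφ : WeakHom G H φ) {x : V} {y : W} (hne : y ≠ φ x)
    (hnadj : ¬ H.Adj (φ x) y) : mult G φ y x = 0 := by
  refine card_eq_zero.mpr (filter_eq_empty_iff.mpr ?_)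
  rintro w - ⟨rfl, hxw⟩
  rcases hφ x w hxw with h | h
  exacts [hnadj h, hne h.symm]

theorem WeakHom.sum_mult_erase [Fintype W] (hφ : WeakHom G H φ) (x : V) :
    ∑ y ∈ univ.erase (φ x), mult G φ y x = ∑ y ∈ univ.filter (H.Adj (φ x)), mult G φ y x := by
  refine (sum_subset (fun y hy => ?_) fun y hy hny => ?_).symm
  · exact mem_erase.mpr ⟨(H.ne_of_adj (mem_filter.mp hy).2).symm, mem_univ y⟩
  · exact hφ.mult_eq_zero (mem_erase.mp hy).1 (by simpa using hny)

namespace HorizontallyConformal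

theorem mult_eq_of_adj (hφ : HorizontallyConformal G H φ) {x : V} {y₁ y₂ : W}
    (h₁ : H.Adj (φ x) y₁) (h₂ : H.Adj (φ x) y₂) : mult G φ y₁ x = mult G φ y₂ x :=
  hφ.2 _ x rfl y₁ y₂ h₁ h₂

theorem gdeg_eq [Fintype W] (hφ : HorizontallyConformal G H φ) {x : V} {y : W}
    (hy : H.Adj (φ x) y) :
    gdeg G x = mult G φ (φ x) x + gdeg H (φ x) * mult G φ y x := by
  rw [gdeg_eq_sum_mult G φ, ← add_sum_erase _ _ (mem_univ (φ x)), hφ.1.sum_mult_erase,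
    sum_congr rfl fun y' hy' => hφ.mult_eq_of_adj (mem_filter.mp hy').2 hy, sum_const,
    smul_eq_mul, gdeg]

theorem mult_pos (hφ : HorizontallyConformal G H φ) {x : V} {y : W} (hy : H.Adj (φ x) y)
    (hout : ∃ w, G.Adj x w ∧ φ w ≠ φ x) : 0 < mult G φ y x := by
  obtain ⟨w, hxw, hw⟩ := hout
  have hadj : H.Adj (φ x) (φ w) := (hφ.1 x w hxw).resolve_right hw.symm
  exact hφ.mult_eq_of_adj hy hadj ▸ mult_pos_of_adj hxw

end HorizontallyConformal

end Multiplicity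

theorem horizontally_conformal_exit_probability_general
    [Fintype V] [Fintype W] (G : SimpleGraph V) (H : SimpleGraph W)
    (φ : V → W)
    (hhc : HorizontallyConformal G H φ)
    (y : W) (y' : W) (hadj : H.Adj y y')
    (z : V) (hz : φ z = y) (hout : ∃ w : V, G.Adj z w ∧ φ w ≠ y) :
    (mult G φ y' z : ℝ) / ((gdeg G z : ℝ) - (mult G φ y z : ℝ)) =
      1 / (gdeg H y : ℝ) := by
  subst hz
  have hk : (mult G φ y' z : ℝ) ≠ 0 := by exact_mod_cast (hhc.mult_pos hadj hout).ne'
  have hexit : (gdeg G z : ℝ) - mult G φ (φ z) z = gdeg H (φ z) * mult G φ y' z := by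
    rw [hhc.gdeg_eq hadj]
    push_cast
    ring
  rw [hexit, div_mul_cancel_right₀ hk, one_div]

/-- For a surjective horizontally conformal map `φ` onto its quotient graph, the
conditional probability that the simple random walk at `z ∈ φ⁻¹(y)` exits `φ⁻¹(y)`
into `φ⁻¹(y')` in one step, given that it exits in one step, equals `1 / deg_𝒢(y)`:
`k_{y'}(z) / (deg_G(z) − k_y(z)) = 1 / deg_𝒢(y)`. -/
theorem horizontally_conformal_exit_probability
    [Fintype V] [Fintype W] (G : SimpleGraph V) (H : SimpleGraph W)
    (φ : V → W) (hsurj : Function.Surjective φ)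
    (hquot : ∀ y y' : W, H.Adj y y' ↔
      y ≠ y' ∧ ∃ x z : V, φ x = y ∧ φ z = y' ∧ G.Adj x z)
    (hhc : HorizontallyConformal G H φ)
    (y : W) (hdegy : 1 ≤ gdeg H y) (y' : W) (hadj : H.Adj y y')
    (z : V) (hz : φ z = y) (hout : ∃ w : V, G.Adj z w ∧ φ w ≠ y) :
    (mult G φ y' z : ℝ) / ((gdeg G z : ℝ) - (mult G φ y z : ℝ)) =
      1 / (gdeg H y : ℝ) :=
  horizontally_conformal_exit_probability_general G H φ hhc y y' hadj z hz hout
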